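/- arXiv:1510.03945 — 2 statements merged into one kernel-verified Lean document; each statement's English description precedes it below -/
import Mathlib

section
/- For every graph G and every finite collection H of connected graphs, the minimum size of a set of vertices meeting every H-subdivision in G is at most the minimum size of a set of edges meeting every H-subdivision in G. -/
open SimpleGraph

/-- `M` is (isomorphic to) a subdivision of the graph `Hg`: there is an injection `φ` of the
branch vertices and a family of internally disjoint paths, one for each edge of `Hg`,
covering all vertices and edges of `M`. -/
def IsSubdivisionOf {α β : Type*} (M : SimpleGraph α) (Hg : SimpleGraph β) : Prop :=
  ∃ (φ : β ↪ α) (P : ∀ a b : β, Hg.Adj a b → M.Walk (φ a) (φ b)),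
    (∀ (a b : β) (h : Hg.Adj a b), (P a b h).IsPath) ∧
    (∀ (a b : β) (h : Hg.Adj a b), ∀ x ∈ (P a b h).support,
      (∃ c, x = φ c) → x = φ a ∨ x = φ b) ∧
    (∀ (a b a' b' : β) (h : Hg.Adj a b) (h' : Hg.Adj a' b'),
      ¬(a = a' ∧ b = b') → ¬(a = b' ∧ b = a') →
      ∀ x ∈ (P a b h).support, x ∈ (P a' b' h').support → x = φ a ∨ x = φ b) ∧
    (∀ x : α, ∃ (a b : β) (h : Hg.Adj a b), x ∈ (P a b h).support) ∧
    (∀ e ∈ M.edgeSet, ∃ (a b : β) (h : Hg.Adj a b), e ∈ (P a b h).edges)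

/-- `M` is an `H`-subdivision in `G`: a subgraph of `G` isomorphic to a subdivision of some
member of the finite collection `Hf`. -/
def IsHSubdivision {V ι : Type*} {n : ι → ℕ} (G : SimpleGraph V)
    (Hf : ∀ i : ι, SimpleGraph (Fin (n i))) (M : G.Subgraph) : Prop :=
  ∃ i, IsSubdivisionOf M.coe (Hf i)

/-- the minimum size of a vertex set meeting every `H`-subdivision of `G` is at
most the minimum size of an edge set (a set of edges of `G`) meeting every `H`-subdivision. -/
theorem vcover_le_ecover {V ι : Type*} [Fintype ι] {n : ι → ℕ}
    (Hf : ∀ i : ι, SimpleGraph (Fin (n i))) (hconn : ∀ i, (Hf i).Connected)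
    (G : SimpleGraph V) (C : Set (Sym2 V)) (hCE : C ⊆ G.edgeSet) (hCfin : C.Finite)
    (hC : ∀ M : G.Subgraph, IsHSubdivision G Hf M → (M.edgeSet ∩ C).Nonempty) :
    ∃ C' : Set V,
      (∀ M : G.Subgraph, IsHSubdivision G Hf M → (M.verts ∩ C').Nonempty) ∧
      C'.ncard ≤ C.ncard := by
  refine ⟨(fun e => e.out.1) '' C, ?_, Set.ncard_image_le hCfin⟩
  intro M hM
  obtain ⟨e, heM, heC⟩ := hC M hM
  exact ⟨e.out.1, M.mem_verts_of_mem_edge heM (Sym2.out_fst_mem e), ⟨e, heC, rfl⟩⟩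
end

section
/- For all positive integers r, r' with r' ≤ r, the graph theta_{r,r'} is a minor of the r-star, of the r-path, of the (r+r'+1)-fan, and (when r ≥ 6) of the r-wall. -/
/-!
In every pattern, `θ_{r,r'}` is obtained by contracting three disjoint connected sets
`A`, `B`, `C` with `r` edges between `A` and `B` and `r'` edges between `B` and `C`.
In the star and the path, take three consecutive branch vertices `x`, `y`, `z`:
`A = {x}`, `B` is `y` with the `r` midpoints between `x` and `y`, and `C` is `z` with the
midpoints between `y` and `z` (for `r = 1` these graphs are just paths on three vertices).
In the fan, `B` is the apex and `A`, `C` are disjoint subpaths with `r` and `r'` vertices.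
In the wall, `A`, `B`, `C` are the column pairs `{0, 1}`, `{2, 3}`, `{4, 5}`; each pair is a
zigzag path, and consecutive pairs are joined by a horizontal edge in every row.
-/

open SimpleGraph

/-- `G` contains `θ_{r,r'}` as a minor: there are three disjoint nonempty connected branch
sets `A`, `B`, `C` with at least `r` edges between `A` and `B` and at least `r'` edges
between `B` and `C`. -/
def HasThetaTwoMinor {V : Type*} (G : SimpleGraph V) (r r' : ℕ) : Prop :=
  ∃ A B C : Set V,
    A.Nonempty ∧ B.Nonempty ∧ C.Nonempty ∧
    Disjoint A B ∧ Disjoint A C ∧ Disjoint B C ∧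
    (G.induce A).Connected ∧ (G.induce B).Connected ∧ (G.induce C).Connected ∧
    r ≤ Set.ncard {e ∈ G.edgeSet | ∃ u ∈ A, ∃ v ∈ B, e = s(u, v)} ∧
    r' ≤ Set.ncard {e ∈ G.edgeSet | ∃ u ∈ B, ∃ v ∈ C, e = s(u, v)}

/-- The `n`-fan: a path on `n` vertices together with a dominating vertex `none`. -/
def fanGraph (n : ℕ) : SimpleGraph (Option (Fin n)) :=
  SimpleGraph.fromRel fun a b =>
    (∃ i : Fin n, a = some i ∧ b = none) ∨
    (∃ i j : Fin n, a = some i ∧ b = some j ∧ i.val + 1 = j.val)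

/-- The `n`-star: `K_{1,n}` (center `none`, leaves `some (inl i)`) with each edge replaced
by `n` independent paths of two edges (midpoints `some (inr (i, j))`). -/
def starGraph (n : ℕ) : SimpleGraph (Option (Fin n ⊕ Fin n × Fin n)) :=
  SimpleGraph.fromRel fun a b =>
    (∃ q : Fin n × Fin n, a = none ∧ b = some (Sum.inr q)) ∨
    (∃ i j : Fin n, a = some (Sum.inr (i, j)) ∧ b = some (Sum.inl i))

/-- The `n`-path: a path with `n` edges (vertices `inl k`) in which each edge is replaced by
`n` independent paths of two edges (midpoints `inr (i, j)` on the `i`-th edge). -/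
def nPathGraph (n : ℕ) : SimpleGraph (Fin (n + 1) ⊕ Fin n × Fin n) :=
  SimpleGraph.fromRel fun a b =>
    ∃ i j : Fin n,
      (a = Sum.inl i.castSucc ∧ b = Sum.inr (i, j)) ∨
      (a = Sum.inr (i, j) ∧ b = Sum.inl i.succ)

/-- The `n`-wall on vertex set `Fin n × Fin n` (rows × columns): all horizontal edges, and
the vertical edges between consecutive rows at columns of the appropriate parity. -/
def wallGraph (n : ℕ) : SimpleGraph (Fin n × Fin n) :=
  SimpleGraph.fromRel fun a b =>
    (a.1 = b.1 ∧ a.2.val + 1 = b.2.val) ∨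
    (a.2 = b.2 ∧ a.1.val + 1 = b.1.val ∧ Even (a.1.val + a.2.val))

namespace SimpleGraph

variable {V : Type*} {G : SimpleGraph V}

theorem connected_induce_of_exists_adj_lt {A : Set V} {c : V} (hc : c ∈ A) (rank : V → ℕ)
    (h : ∀ v ∈ A, v ≠ c → ∃ w ∈ A, G.Adj v w ∧ rank w < rank v) :
    (G.induce A).Connected := by
  have reach (v : A) : (G.induce A).Reachable v ⟨c, hc⟩ := by
    induction v using (measure fun v : A => rank v).wf.induction with
    | _ v ih =>
      by_cases hv : v.val = c
      · rw [show v = ⟨c, hc⟩ from Subtype.ext hv]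
      · obtain ⟨w, hw, hvw, hlt⟩ := h v v.2 hv
        exact (Adj.reachable (G := G.induce A) (u := v) (v := ⟨w, hw⟩) hvw).trans
          (ih ⟨w, hw⟩ hlt)
  exact (connected_iff_exists_forall_reachable _).2 ⟨⟨c, hc⟩, fun v => (reach v).symm⟩

theorem connected_induce_of_forall_adj {A : Set V} {c : V} (hc : c ∈ A)
    (h : ∀ v ∈ A, v ≠ c → G.Adj v c) : (G.induce A).Connected := by
  classical
  exact connected_induce_of_exists_adj_lt hc (fun v => if v = c then 0 else 1)
    fun v hv hvc => ⟨c, hc, h v hv hvc, by simp [hvc]⟩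

theorem le_ncard_edges_of_injective [Finite V] {A B : Set V} (hAB : Disjoint A B) {r : ℕ}
    (f g : Fin r → V) (hf : ∀ i, f i ∈ A) (hg : ∀ i, g i ∈ B) (hfg : ∀ i, G.Adj (f i) (g i))
    (hinj : Function.Injective fun i => (f i, g i)) :
    r ≤ {e ∈ G.edgeSet | ∃ u ∈ A, ∃ v ∈ B, e = s(u, v)}.ncard := by
  refine le_of_eq_of_le (by simp) (Set.ncard_le_ncard_of_injOn (s := .univ)
    (fun i => s(f i, g i)) (fun i _ => ⟨hfg i, f i, hf i, g i, hg i, rfl⟩) ?_ (Set.toFinite _))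
  intro i _ j _ hij
  rcases Sym2.eq_iff.1 hij with h | ⟨h, -⟩
  · exact hinj (Prod.ext h.1 h.2)
  · exact absurd h (hAB.ne_of_mem (hf i) (hg j))

end SimpleGraph

theorem HasThetaTwoMinor.of_connected {V : Type*} {G : SimpleGraph V} {r r' : ℕ}
    {A B C : Set V} (hAB : Disjoint A B) (hAC : Disjoint A C) (hBC : Disjoint B C)
    (hA : (G.induce A).Connected) (hB : (G.induce B).Connected) (hC : (G.induce C).Connected)
    (hr : r ≤ {e ∈ G.edgeSet | ∃ u ∈ A, ∃ v ∈ B, e = s(u, v)}.ncard)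
    (hr' : r' ≤ {e ∈ G.edgeSet | ∃ u ∈ B, ∃ v ∈ C, e = s(u, v)}.ncard) :
    HasThetaTwoMinor G r r' :=
  ⟨A, B, C, Set.nonempty_coe_sort.1 hA.nonempty, Set.nonempty_coe_sort.1 hB.nonempty,
    Set.nonempty_coe_sort.1 hC.nonempty, hAB, hAC, hBC, hA, hB, hC, hr, hr'⟩

theorem hasThetaTwoMinor_one_one_of_adj {V : Type*} [Finite V] {G : SimpleGraph V} {u v w : V}
    (huv : G.Adj u v) (hvw : G.Adj v w) (huw : u ≠ w) : HasThetaTwoMinor G 1 1 := by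
  refine .of_connected (A := {u}) (B := {v}) (C := {w}) (by simpa using huv.ne)
    (by simpa using huw) (by simpa using hvw.ne) (by simp) (by simp) (by simp) ?_ ?_
  · exact le_ncard_edges_of_injective (by simpa using huv.ne) (fun _ => u) (fun _ => v)
      (fun _ => rfl) (fun _ => rfl) (fun _ => huv) (fun _ _ _ => Subsingleton.elim _ _)
  · exact le_ncard_edges_of_injective (by simpa using hvw.ne) (fun _ => v) (fun _ => w)
      (fun _ => rfl) (fun _ => rfl) (fun _ => hvw) (fun _ _ _ => Subsingleton.elim _ _)

theorem hasThetaTwoMinor_of_commonNeighbors {V : Type*} [Finite V] {G : SimpleGraph V} {r r' : ℕ}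
    {x y z : V} (hxy : x ≠ y) (hxz : x ≠ z) (hyz : y ≠ z)
    (m : Fin r → V) (hm : Function.Injective m) (hxm : ∀ i, G.Adj x (m i))
    (hmy : ∀ i, G.Adj (m i) y)
    (m' : Fin r' → V) (hm' : Function.Injective m') (hym' : ∀ i, G.Adj y (m' i))
    (hm'z : ∀ i, G.Adj (m' i) z)
    (hmz : ∀ i, m i ≠ z) (hm'x : ∀ i, m' i ≠ x) (hmm' : ∀ i j, m i ≠ m' j) :
    HasThetaTwoMinor G r r' := by
  have hmx i : m i ≠ x := (hxm i).ne'
  have hm'y i : m' i ≠ y := (hym' i).ne'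
  have hAB : Disjoint {x} (insert y (Set.range m)) := by simp [hxy, hmx]
  have hAC : Disjoint {x} (insert z (Set.range m')) := by simp [hxz, hm'x]
  have hBC : Disjoint (insert y (Set.range m)) (insert z (Set.range m')) := by
    simpa [Set.disjoint_left, hyz, hm'y, hmz] using fun i j => (hmm' i j).symm
  refine .of_connected hAB hAC hBC (by simp)
    (connected_induce_of_forall_adj (Set.mem_insert _ _) ?_)
    (connected_induce_of_forall_adj (Set.mem_insert _ _) ?_)
    (le_ncard_edges_of_injective hAB (fun _ => x) m (fun _ => rfl)
      (fun i => Set.mem_insert_of_mem _ ⟨i, rfl⟩) hxm (.of_comp (f := Prod.snd) hm))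
    (le_ncard_edges_of_injective hBC (fun _ => y) m' (fun _ => Set.mem_insert _ _)
      (fun i => Set.mem_insert_of_mem _ ⟨i, rfl⟩) hym' (.of_comp (f := Prod.snd) hm'))
  · rintro _ (rfl | ⟨i, rfl⟩) hv
    exacts [absurd rfl hv, hmy i]
  · rintro _ (rfl | ⟨i, rfl⟩) hv
    exacts [absurd rfl hv, hm'z i]

section Patterns

variable {n : ℕ}

theorem starGraph_adj_none (q : Fin n × Fin n) :
    (_root_.starGraph n).Adj none (some (.inr q)) :=
  ⟨by simp, .inl (.inl ⟨q, rfl, rfl⟩)⟩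

theorem starGraph_adj_inl (i j : Fin n) :
    (_root_.starGraph n).Adj (some (.inr (i, j))) (some (.inl i)) :=
  ⟨by simp, .inl (.inr ⟨i, j, rfl, rfl⟩)⟩

theorem nPathGraph_adj_castSucc (i j : Fin n) :
    (nPathGraph n).Adj (.inl i.castSucc) (.inr (i, j)) :=
  ⟨by simp, .inl ⟨i, j, .inl ⟨rfl, rfl⟩⟩⟩

theorem nPathGraph_adj_succ (i j : Fin n) :
    (nPathGraph n).Adj (.inr (i, j)) (.inl i.succ) :=
  ⟨by simp, .inl ⟨i, j, .inr ⟨rfl, rfl⟩⟩⟩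

theorem fanGraph_adj_none (i : Fin n) : (fanGraph n).Adj (some i) none :=
  ⟨by simp, .inl (.inl ⟨i, rfl, rfl⟩)⟩

theorem fanGraph_adj_some {i j : Fin n} (h : i.val + 1 = j.val) :
    (fanGraph n).Adj (some i) (some j) :=
  ⟨by simp [Fin.ext_iff]; omega, .inl (.inr ⟨i, j, rfl, rfl, h⟩)⟩

theorem fanGraph_connected_induce_segment {a b : ℕ} (hab : a < b) (hb : b ≤ n) :
    ((fanGraph n).induce {v | ∃ i : Fin n, v = some i ∧ a ≤ i.val ∧ i.val < b}).Connected := by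
  refine connected_induce_of_exists_adj_lt ⟨⟨a, by omega⟩, rfl, le_rfl, hab⟩
    (Option.elim · 0 Fin.val) ?_
  rintro _ ⟨i, rfl, hai, hib⟩ hi
  have : a < i.val := lt_of_le_of_ne hai fun h => hi (by simp [h])
  exact ⟨some ⟨i - 1, by omega⟩, ⟨_, rfl, by simp only; omega, by simp only; omega⟩,
    fanGraph_adj_some (by simp only; omega) |>.symm, by simp only [Option.elim]; omega⟩

theorem wallGraph_adj_right (i : Fin n) {j j' : Fin n} (h : j.val + 1 = j'.val) :
    (wallGraph n).Adj (i, j) (i, j') :=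
  ⟨by simp [Fin.ext_iff]; omega, .inl (.inl ⟨rfl, h⟩)⟩

theorem wallGraph_adj_down {i i' : Fin n} (j : Fin n) (h : i.val + 1 = i'.val)
    (he : Even (i.val + j.val)) : (wallGraph n).Adj (i, j) (i', j) :=
  ⟨by simp [Fin.ext_iff]; omega, .inl (.inr ⟨rfl, h, he⟩)⟩

def wallColumnPair (n m : ℕ) : Set (Fin n × Fin n) := {p | p.2.val = m ∨ p.2.val = m + 1}

theorem disjoint_wallColumnPair {m m' : ℕ} (h : m + 2 ≤ m') :
    Disjoint (wallColumnPair n m) (wallColumnPair n m') := by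
  simp only [wallColumnPair, Set.disjoint_left, Set.mem_ofPred_eq]
  omega

-- The two columns form a zigzag path starting at `(0, m + 1)`; the rank is the position on it.
theorem wallGraph_connected_induce_wallColumnPair {m : ℕ} (hm : Even m) (hmn : m + 1 < n) :
    ((wallGraph n).induce (wallColumnPair n m)).Connected := by
  refine connected_induce_of_exists_adj_lt (c := (⟨0, by omega⟩, ⟨m + 1, hmn⟩)) (Or.inr rfl)
    (fun p => 2 * p.1.val + if Even (p.1.val + p.2.val) then 1 else 0) ?_
  rintro ⟨i, j⟩ hj hc
  simp only [wallColumnPair, Set.mem_ofPred_eq, Nat.even_iff] at hj hm ⊢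
  by_cases he : (i.val + j.val) % 2 = 0
  · rcases hj with hj | hj
    · exact ⟨(i, ⟨m + 1, hmn⟩), Or.inr rfl, wallGraph_adj_right i (by simp [hj]),
        by simp only; split_ifs <;> omega⟩
    · exact ⟨(i, ⟨m, by omega⟩), Or.inl rfl, (wallGraph_adj_right i (by simp [hj])).symm,
        by simp only; split_ifs <;> omega⟩
  · have hi : i.val ≠ 0 := fun hi =>
      hc (Prod.ext (Fin.ext hi) (Fin.ext (show j.val = m + 1 by omega)))
    refine ⟨(⟨i - 1, by omega⟩, j), hj,
      (wallGraph_adj_down j (by simp only; omega) (Nat.even_iff.2 ?_)).symm, ?_⟩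
    · simp only
      omega
    · simp only
      split_ifs <;> omega

end Patterns

theorem hasThetaTwoMinor_starGraph {r r' : ℕ} (hr' : 1 ≤ r') (hrr : r' ≤ r) :
    HasThetaTwoMinor (_root_.starGraph r) r r' := by
  obtain rfl | hr := (hr'.trans hrr).eq_or_lt
  · obtain rfl : r' = 1 := le_antisymm hrr hr'
    exact hasThetaTwoMinor_one_one_of_adj (starGraph_adj_inl 0 0).symm
      (starGraph_adj_none (0, 0)).symm (by simp)
  · let i₀ : Fin r := ⟨0, by omega⟩
    let i₁ : Fin r := ⟨1, hr⟩
    exact hasThetaTwoMinor_of_commonNeighbors (x := some (.inl i₀)) (y := none)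
      (z := some (.inl i₁)) (by simp) (by simp [i₀, i₁]) (by simp)
      (fun j => some (.inr (i₀, j))) (by intro j k; simp) (fun _ => (starGraph_adj_inl _ _).symm)
      (fun _ => (starGraph_adj_none _).symm)
      (fun j => some (.inr (i₁, Fin.castLE hrr j))) (by intro j k; simp)
      (fun _ => starGraph_adj_none _) (fun _ => starGraph_adj_inl _ _)
      (by simp) (by simp) (by simp [i₀, i₁])

theorem hasThetaTwoMinor_nPathGraph {r r' : ℕ} (hr' : 1 ≤ r') (hrr : r' ≤ r) :
    HasThetaTwoMinor (nPathGraph r) r r' := by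
  obtain rfl | hr := (hr'.trans hrr).eq_or_lt
  · obtain rfl : r' = 1 := le_antisymm hrr hr'
    exact hasThetaTwoMinor_one_one_of_adj (nPathGraph_adj_castSucc 0 0)
      (nPathGraph_adj_succ 0 0) (by simp)
  · let i₀ : Fin r := ⟨0, by omega⟩
    let i₁ : Fin r := ⟨1, hr⟩
    exact hasThetaTwoMinor_of_commonNeighbors (x := .inl i₀.castSucc) (y := .inl i₁.castSucc)
      (z := .inl i₁.succ) (by simp [i₀, i₁]) (by simp [i₀, i₁, Fin.ext_iff])
      (by simp [i₁, Fin.ext_iff])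
      (fun j => .inr (i₀, j)) (by intro j k; simp) (fun _ => nPathGraph_adj_castSucc _ _)
      (fun _ => nPathGraph_adj_succ _ _)
      (fun j => .inr (i₁, Fin.castLE hrr j)) (by intro j k; simp)
      (fun _ => nPathGraph_adj_castSucc _ _) (fun _ => nPathGraph_adj_succ _ _)
      (by simp) (by simp) (by simp [i₀, i₁])

theorem hasThetaTwoMinor_fanGraph {r r' : ℕ} (hr' : 1 ≤ r') (hrr : r' ≤ r) :
    HasThetaTwoMinor (fanGraph (r + r' + 1)) r r' := by
  have hAB : Disjoint {v | ∃ i : Fin (r + r' + 1), v = some i ∧ 0 ≤ i.val ∧ i.val < r} {none} :=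
    Set.disjoint_singleton_right.2 fun ⟨_, h, _⟩ => nomatch h
  have hBC : Disjoint {none}
      {v | ∃ i : Fin (r + r' + 1), v = some i ∧ r + 1 ≤ i.val ∧ i.val < r + r' + 1} :=
    Set.disjoint_singleton_left.2 fun ⟨_, h, _⟩ => nomatch h
  refine .of_connected hAB ?_ hBC (fanGraph_connected_induce_segment (by omega) (by omega))
    (by simp) (fanGraph_connected_induce_segment (by omega) le_rfl)
    (le_ncard_edges_of_injective hAB (fun t => some ⟨t, by omega⟩) (fun _ => none)
      (fun t => ⟨_, rfl, Nat.zero_le _, t.isLt⟩) (fun _ => rfl) (fun _ => fanGraph_adj_none _) ?_)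
    (le_ncard_edges_of_injective hBC (fun _ => none) (fun t => some ⟨r + 1 + t, by omega⟩)
      (fun _ => rfl) (fun t => ⟨_, rfl, by simp, by simp; omega⟩)
      (fun _ => (fanGraph_adj_none _).symm) ?_)
  · simp only [Set.disjoint_left]
    rintro _ ⟨i, rfl, -, hi⟩ ⟨j, hij, hj, -⟩
    obtain rfl := Option.some_injective _ hij
    omega
  · intro s t h
    simpa [Fin.ext_iff] using h
  · intro s t h
    simpa [Fin.ext_iff] using h

theorem hasThetaTwoMinor_wallGraph {r r' : ℕ} (hrr : r' ≤ r) (h6 : 6 ≤ r) :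
    HasThetaTwoMinor (wallGraph r) r r' := by
  have hAB := disjoint_wallColumnPair (n := r) (m := 0) (m' := 2) le_rfl
  have hBC := disjoint_wallColumnPair (n := r) (m := 2) (m' := 4) le_rfl
  refine .of_connected hAB (disjoint_wallColumnPair (by omega)) hBC
    (wallGraph_connected_induce_wallColumnPair (by decide) (by omega))
    (wallGraph_connected_induce_wallColumnPair (by decide) (by omega))
    (wallGraph_connected_induce_wallColumnPair (by decide) (by omega))
    (le_ncard_edges_of_injective hAB (fun t => (t, ⟨1, by omega⟩)) (fun t => (t, ⟨2, by omega⟩))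
      (fun _ => Or.inr rfl) (fun _ => Or.inl rfl) (fun t => wallGraph_adj_right t rfl) ?_)
    (le_ncard_edges_of_injective hBC (fun t => (⟨t, by omega⟩, ⟨3, by omega⟩))
      (fun t => (⟨t, by omega⟩, ⟨4, by omega⟩))
      (fun _ => Or.inr rfl) (fun _ => Or.inl rfl) (fun _ => wallGraph_adj_right _ rfl) ?_)
  · intro s t h
    simpa using h
  · intro s t h
    simpa [Fin.ext_iff] using h

/-- for `1 ≤ r' ≤ r`, the graph `θ_{r,r'}` is a minor of the `r`-star, of the
`r`-path, of the `(r + r' + 1)`-fan, and (when `r ≥ 6`) of the `r`-wall. -/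
theorem theta_two_minor_of_patterns (r r' : ℕ) (hr' : 1 ≤ r') (hrr : r' ≤ r) :
    HasThetaTwoMinor (_root_.starGraph r) r r' ∧
    HasThetaTwoMinor (nPathGraph r) r r' ∧
    HasThetaTwoMinor (fanGraph (r + r' + 1)) r r' ∧
    (6 ≤ r → HasThetaTwoMinor (wallGraph r) r r') :=
  ⟨hasThetaTwoMinor_starGraph hr' hrr, hasThetaTwoMinor_nPathGraph hr' hrr,
    hasThetaTwoMinor_fanGraph hr' hrr, hasThetaTwoMinor_wallGraph hrr⟩
end
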